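/- arXiv:2604.24016 — 2 statements merged into one kernel-verified Lean document; each statement's English description precedes it below -/
import Mathlib

section
/- Let d ≥ 1, n ≥ 1, let G be a symmetric positive definite d×d real matrix with G ⪰ I (Loewner order), and let x_1, …, x_n ∈ ℝ^d satisfy ‖x_j‖₂ ≤ 1 for all j. Define W_0 := G and W_j := W_{j−1} + x_j x_j^⊤ for 1 ≤ j ≤ n. Then Σ_{j=1}^n x_j^⊤ W_{j−1}^{−1} x_j ≤ 2 log( det(W_n) / det(G) ). -/
open Matrix

/-- The Euclidean norm of a vector in `ℝ^d`. -/
noncomputable def euclNorm {d : ℕ} (v : Fin d → ℝ) : ℝ :=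
  Real.sqrt (v ⬝ᵥ v)

/-- The design (Gram) matrix after `j` rounds with base matrix `G0`:
`G0 + Σ_{i<j} x_i x_iᵀ` (0-indexed, so this is `W_j` with `W_0 = G0`). -/
noncomputable def gram {d : ℕ} (G0 : Matrix (Fin d) (Fin d) ℝ) (x : ℕ → Fin d → ℝ) (j : ℕ) :
    Matrix (Fin d) (Fin d) ℝ :=
  G0 + ∑ i ∈ Finset.range j, vecMulVec (x i) (x i)

/-! By the matrix determinant lemma `det (W + x xᵀ) = det W * (1 + xᵀ W⁻¹ x)`, the ratio
`det W_n / det G` telescopes into `∏ j, (1 + u_j)` with `u_j = x_jᵀ W_{j-1}⁻¹ x_j`. Since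
`W_{j-1} ⪰ G ⪰ I`, we have `u_j ≤ ‖x_j‖² ≤ 1`, and on `[0, 1]` the bound `log (1 + u) ≥ u / (1 + u)`
gives `u ≤ 2 log (1 + u)`. -/

namespace Matrix

variable {ι : Type*} [DecidableEq ι]

lemma PosSemidef.posDef_of_sub_one {A : Matrix ι ι ℝ} (hA : (A - 1).PosSemidef) : A.PosDef := by
  simpa using PosDef.posSemidef_add hA PosDef.one

variable [Fintype ι]

lemma PosSemidef.dotProduct_inv_mulVec_nonneg {A : Matrix ι ι ℝ} (hA : A.PosSemidef) (v : ι → ℝ) :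
    0 ≤ v ⬝ᵥ A⁻¹ *ᵥ v := by
  simpa using hA.inv.dotProduct_mulVec_nonneg v

lemma dotProduct_inv_mulVec_le_of_sub_one {A : Matrix ι ι ℝ} (hA : (A - 1).PosSemidef)
    (v : ι → ℝ) : v ⬝ᵥ A⁻¹ *ᵥ v ≤ v ⬝ᵥ v := by
  have hdet : IsUnit A.det := (isUnit_iff_isUnit_det A).mp hA.posDef_of_sub_one.isUnit
  -- With `w = A⁻¹ v`: `w ⬝ᵥ w ≤ w ⬝ᵥ A w = v ⬝ᵥ w`, and then `0 ≤ ‖v - w‖²` gives `v ⬝ᵥ w ≤ v ⬝ᵥ v`.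
  set w := A⁻¹ *ᵥ v
  have hv : A *ᵥ w = v := by simp [w, mulVec_mulVec, mul_nonsing_inv _ hdet]
  have hww : w ⬝ᵥ w ≤ v ⬝ᵥ w := by
    have hAw := hA.dotProduct_mulVec_nonneg w
    rw [sub_mulVec, one_mulVec, dotProduct_sub, hv, star_trivial, dotProduct_comm w v] at hAw
    linarith
  have hsq : 0 ≤ (v - w) ⬝ᵥ (v - w) := by
    simpa using (PosSemidef.one (n := ι) (R := ℝ)).dotProduct_mulVec_nonneg (v - w)
  simp only [sub_dotProduct, dotProduct_sub, dotProduct_comm w v] at hsq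
  linarith

lemma det_add_vecMulVec_self {A : Matrix ι ι ℝ} (hA : IsUnit A.det) (v : ι → ℝ) :
    (A + vecMulVec v v).det = A.det * (1 + v ⬝ᵥ A⁻¹ *ᵥ v) := by
  rw [vecMulVec_eq Unit, det_add_replicateCol_mul_replicateRow hA, Matrix.mul_assoc,
    ← replicateCol_mulVec]
  simp [det_unique]

end Matrix

lemma Real.le_two_mul_log_one_add {u : ℝ} (h0 : 0 ≤ u) (h1 : u ≤ 1) :
    u ≤ 2 * Real.log (1 + u) := by
  have hlog := Real.one_sub_inv_le_log_of_pos (x := 1 + u) (by linarith)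
  have hfrac : 1 - (1 + u)⁻¹ = u / (1 + u) := by field_simp; ring
  have hhalf : u / 2 ≤ u / (1 + u) := div_le_div_of_nonneg_left h0 (by linarith) (by linarith)
  linarith

section gram

variable {d : ℕ} {G : Matrix (Fin d) (Fin d) ℝ} {x : ℕ → Fin d → ℝ}

lemma gram_zero : gram G x 0 = G := by
  simp [_root_.gram]

lemma gram_succ (j : ℕ) : gram G x (j + 1) = gram G x j + vecMulVec (x j) (x j) := by
  rw [_root_.gram, _root_.gram, Finset.sum_range_succ, add_assoc]

lemma gram_sub_one_posSemidef (hG : (G - 1).PosSemidef) (j : ℕ) :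
    (gram G x j - 1).PosSemidef := by
  induction j with
  | zero => rwa [gram_zero]
  | succ j ih =>
    rw [gram_succ, add_sub_right_comm]
    exact ih.add (by simpa using posSemidef_vecMulVec_self_star (x j))

lemma gram_posDef (hG : (G - 1).PosSemidef) (j : ℕ) : (gram G x j).PosDef :=
  (gram_sub_one_posSemidef hG j).posDef_of_sub_one

lemma det_gram (hG : (G - 1).PosSemidef) (n : ℕ) :
    (gram G x n).det = G.det * ∏ j ∈ Finset.range n, (1 + x j ⬝ᵥ (gram G x j)⁻¹ *ᵥ x j) := by
  induction n with
  | zero => simp [gram_zero]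
  | succ n ih =>
    have hdet := (isUnit_iff_isUnit_det (gram G x n)).mp (gram_posDef hG n).isUnit
    rw [gram_succ, det_add_vecMulVec_self hdet, ih, Finset.prod_range_succ, mul_assoc]

end gram

theorem stmt_5_general {d n : ℕ}
    (G : Matrix (Fin d) (Fin d) ℝ) (hGI : (G - 1).PosSemidef)
    (x : ℕ → Fin d → ℝ) (hx : ∀ j < n, euclNorm (x j) ≤ 1) :
    (∑ j ∈ Finset.range n, x j ⬝ᵥ (gram G x j)⁻¹.mulVec (x j)) ≤
      2 * Real.log ((gram G x n).det / G.det) := by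
  set u : ℕ → ℝ := fun j => x j ⬝ᵥ (gram G x j)⁻¹ *ᵥ x j
  have hu_nonneg (j : ℕ) : 0 ≤ u j :=
    (gram_posDef hGI j).posSemidef.dotProduct_inv_mulVec_nonneg _
  have hu_le_one (j : ℕ) (hj : j < n) : u j ≤ 1 :=
    (dotProduct_inv_mulVec_le_of_sub_one (gram_sub_one_posSemidef hGI j) _).trans
      (by simpa [euclNorm] using hx j hj)
  calc ∑ j ∈ Finset.range n, u j
      ≤ ∑ j ∈ Finset.range n, 2 * Real.log (1 + u j) :=
        Finset.sum_le_sum fun j hj =>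
          Real.le_two_mul_log_one_add (hu_nonneg j) (hu_le_one j (Finset.mem_range.mp hj))
    _ = 2 * Real.log (∏ j ∈ Finset.range n, (1 + u j)) := by
        rw [Real.log_prod fun j _ => by linarith [hu_nonneg j], Finset.mul_sum]
    _ = 2 * Real.log ((gram G x n).det / G.det) := by
        rw [det_gram hGI, mul_div_cancel_left₀ _ hGI.posDef_of_sub_one.det_pos.ne']

/-- Pooled elliptical potential with base matrix `G ⪰ I`:
`Σ_{j=1}^n x_jᵀ W_{j-1}⁻¹ x_j ≤ 2 log( det W_n / det G )`. -/
theorem stmt_5 {d n : ℕ} (hd : 1 ≤ d) (hn : 1 ≤ n)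
    (G : Matrix (Fin d) (Fin d) ℝ) (hG : G.PosDef) (hGI : (G - 1).PosSemidef)
    (x : ℕ → Fin d → ℝ) (hx : ∀ j < n, euclNorm (x j) ≤ 1) :
    (∑ j ∈ Finset.range n, x j ⬝ᵥ (gram G x j)⁻¹.mulVec (x j)) ≤
      2 * Real.log ((gram G x n).det / G.det) :=
  stmt_5_general G hGI x hx
end

section
/- Let A and B be symmetric positive definite d×d real matrices and set M := (A^{−1} + B^{−1})^{−1}. Let θ_*, θ†, θ̂_on, θ̂_off ∈ ℝ^d and β_on, β_off ≥ 0 satisfy ‖θ_* − θ̂_on‖_A ≤ β_on and ‖θ† − θ̂_off‖_B ≤ β_off. Then ‖θ_* − θ†‖_M ≤ ‖θ̂_on − θ̂_off‖_M + β_on + β_off. -/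
/-!
The parallel sum is dominated by each summand in the Loewner order, because
`A - (A⁻¹ + B⁻¹)⁻¹ = A (A + B)⁻¹ A` is positive semidefinite. Hence `‖·‖_M ≤ ‖·‖_A` and
`‖·‖_M ≤ ‖·‖_B`, and the bound follows from the triangle inequality for the seminorm `‖·‖_M`
along `θ_* - θ† = (θ_* - θ̂_on) + (θ̂_on - θ̂_off) + (θ̂_off - θ†)`.
-/

open Matrix

/-- The `H`-induced (semi)norm `‖v‖_H := √(vᵀ H v)`. -/
noncomputable def mnorm {d : ℕ} (H : Matrix (Fin d) (Fin d) ℝ) (v : Fin d → ℝ) : ℝ :=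
  Real.sqrt (v ⬝ᵥ H.mulVec v)

open scoped MatrixOrder ComplexOrder

namespace Matrix

section ParallelSum

variable {n 𝕜 : Type*} [Fintype n] [DecidableEq n] [RCLike 𝕜]

theorem inv_add_inv_inv_eq {A B : Matrix n n 𝕜} (hA : IsUnit A.det) (hB : IsUnit B.det) :
    (A⁻¹ + B⁻¹)⁻¹ = B * (A + B)⁻¹ * A := by
  have h : A⁻¹ + B⁻¹ = A⁻¹ * (A + B) * B⁻¹ := by
    rw [mul_add, add_mul, nonsing_inv_mul _ hA, one_mul, mul_nonsing_inv_cancel_right _ _ hB,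
      add_comm]
  rw [h, mul_inv_rev, mul_inv_rev, nonsing_inv_nonsing_inv _ hA, nonsing_inv_nonsing_inv _ hB,
    mul_assoc]

theorem PosDef.inv_add_inv_inv_le_left {A B : Matrix n n 𝕜} (hA : A.PosDef) (hB : B.PosDef) :
    (A⁻¹ + B⁻¹)⁻¹ ≤ A := by
  have hAB : (A + B).PosDef := hA.add hB
  have key : A - (A⁻¹ + B⁻¹)⁻¹ = Aᴴ * (A + B)⁻¹ * A := by
    rw [inv_add_inv_inv_eq hA.det_pos.ne'.isUnit hB.det_pos.ne'.isUnit, hA.isHermitian.eq]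
    calc A - B * (A + B)⁻¹ * A = (A + B) * (A + B)⁻¹ * A - B * (A + B)⁻¹ * A := by
          rw [mul_nonsing_inv _ hAB.det_pos.ne'.isUnit, one_mul]
      _ = A * (A + B)⁻¹ * A := by rw [← sub_mul, ← sub_mul, add_sub_cancel_right]
  rw [le_iff, key]
  exact hAB.inv.posSemidef.conjTranspose_mul_mul_same A

theorem PosDef.inv_add_inv_inv_le_right {A B : Matrix n n 𝕜} (hA : A.PosDef) (hB : B.PosDef) :
    (A⁻¹ + B⁻¹)⁻¹ ≤ B :=
  add_comm B⁻¹ A⁻¹ ▸ hB.inv_add_inv_inv_le_left hA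

end ParallelSum

variable {m n : Type*} [Fintype m] [Fintype n]

theorem PosSemidef.exists_eq_transpose_mul_self [DecidableEq n] {M : Matrix n n ℝ}
    (hM : M.PosSemidef) : ∃ X : Matrix n n ℝ, M = Xᵀ * X := by
  refine ⟨CFC.sqrt M, ?_⟩
  rw [← conjTranspose_eq_transpose_of_trivial, (CFC.sqrt_nonneg M).posSemidef.isHermitian.eq,
    CFC.sqrt_mul_sqrt_self M hM.nonneg]

theorem dotProduct_mulVec_le_of_le {M A : Matrix n n ℝ} (h : M ≤ A) (v : n → ℝ) :
    v ⬝ᵥ M *ᵥ v ≤ v ⬝ᵥ A *ᵥ v := by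
  have hnonneg := (le_iff.mp h).dotProduct_mulVec_nonneg v
  rwa [star_trivial, sub_mulVec, dotProduct_sub, sub_nonneg] at hnonneg

theorem dotProduct_transpose_mul_self_mulVec (X : Matrix m n ℝ) (v : n → ℝ) :
    v ⬝ᵥ (Xᵀ * X) *ᵥ v = (X *ᵥ v) ⬝ᵥ (X *ᵥ v) := by
  rw [← mulVec_mulVec, dotProduct_mulVec, vecMul_transpose, dotProduct_comm]

end Matrix

section mnorm

variable {d : ℕ}

theorem mnorm_transpose_mul_self {m : Type*} [Fintype m] (X : Matrix m (Fin d) ℝ)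
    (v : Fin d → ℝ) : mnorm (Xᵀ * X) v = ‖WithLp.toLp 2 (X *ᵥ v)‖ := by
  rw [mnorm, dotProduct_transpose_mul_self_mulVec, EuclideanSpace.norm_eq, dotProduct]
  simp [sq]

theorem mnorm_add_le {M : Matrix (Fin d) (Fin d) ℝ} (hM : M.PosSemidef) (x y : Fin d → ℝ) :
    mnorm M (x + y) ≤ mnorm M x + mnorm M y := by
  obtain ⟨X, rfl⟩ := hM.exists_eq_transpose_mul_self
  simp only [mnorm_transpose_mul_self, mulVec_add, WithLp.toLp_add]
  exact norm_add_le _ _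

theorem mnorm_sub_comm (M : Matrix (Fin d) (Fin d) ℝ) (x y : Fin d → ℝ) :
    mnorm M (x - y) = mnorm M (y - x) := by
  rw [← neg_sub, mnorm, mnorm, mulVec_neg, neg_dotProduct, dotProduct_neg, neg_neg]

theorem mnorm_le_of_le {M A : Matrix (Fin d) (Fin d) ℝ} (h : M ≤ A) (v : Fin d → ℝ) :
    mnorm M v ≤ mnorm A v :=
  Real.sqrt_le_sqrt (dotProduct_mulVec_le_of_le h v)

end mnorm

theorem stmt_15_general {d : ℕ} (A B : Matrix (Fin d) (Fin d) ℝ)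
    (hA : A.PosDef) (hB : B.PosDef)
    (θstar θdag θon θoff : Fin d → ℝ) (βon βoff : ℝ)
    (h1 : mnorm A (θstar - θon) ≤ βon)
    (h2 : mnorm B (θdag - θoff) ≤ βoff) :
    mnorm (A⁻¹ + B⁻¹)⁻¹ (θstar - θdag) ≤
      mnorm (A⁻¹ + B⁻¹)⁻¹ (θon - θoff) + βon + βoff := by
  set M := (A⁻¹ + B⁻¹)⁻¹
  have hM : M.PosSemidef := (hA.inv.add hB.inv).inv.posSemidef
  have hon : mnorm M (θstar - θon) ≤ βon :=
    (mnorm_le_of_le (hA.inv_add_inv_inv_le_left hB) _).trans h1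
  have hoff : mnorm M (θoff - θdag) ≤ βoff := by
    rw [mnorm_sub_comm]
    exact (mnorm_le_of_le (hA.inv_add_inv_inv_le_right hB) _).trans h2
  have hsplit : θstar - θdag = (θstar - θon) + (θon - θoff) + (θoff - θdag) := by abel
  calc mnorm M (θstar - θdag)
      ≤ mnorm M ((θstar - θon) + (θon - θoff)) + mnorm M (θoff - θdag) := by
        rw [hsplit]
        exact mnorm_add_le hM _ _
    _ ≤ mnorm M (θstar - θon) + mnorm M (θon - θoff) + mnorm M (θoff - θdag) := by
        gcongr
        exact mnorm_add_le hM _ _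
    _ ≤ mnorm M (θon - θoff) + βon + βoff := by linarith

/-- Validity of the data-driven directional bias certificate: with the
parallel sum `M := (A⁻¹ + B⁻¹)⁻¹`, if `‖θ_* − θ̂_on‖_A ≤ β_on` and
`‖θ† − θ̂_off‖_B ≤ β_off`, then `‖θ_* − θ†‖_M ≤ ‖θ̂_on − θ̂_off‖_M + β_on + β_off`. -/
theorem stmt_15 {d : ℕ} (A B : Matrix (Fin d) (Fin d) ℝ)
    (hA : A.PosDef) (hB : B.PosDef)
    (θstar θdag θon θoff : Fin d → ℝ) (βon βoff : ℝ)
    (hβon : 0 ≤ βon) (hβoff : 0 ≤ βoff)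
    (h1 : mnorm A (θstar - θon) ≤ βon)
    (h2 : mnorm B (θdag - θoff) ≤ βoff) :
    mnorm (A⁻¹ + B⁻¹)⁻¹ (θstar - θdag) ≤
      mnorm (A⁻¹ + B⁻¹)⁻¹ (θon - θoff) + βon + βoff :=
  stmt_15_general A B hA hB θstar θdag θon θoff βon βoff h1 h2
end
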